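/- Let Φ be a smooth conformal immersion with Gauss map n and mean curvature H. Then Δn + ∇⊥n × ∇n + 2 div(H∇Φ) = 0, where ∇⊥n × ∇n = n_y × n_x − n_x × n_y and div(H∇Φ) = ∂_x(HΦ_x) + ∂_y(HΦ_y). -/

import Mathlib

open Real MeasureTheory

noncomputable section

/-- Partial derivative in the first coordinate direction. -/
def pd1 {E : Type*} [NormedAddCommGroup E] [NormedSpace ℝ E]
    (f : ℝ × ℝ → E) : ℝ × ℝ → E := fun p => fderiv ℝ f p (1, 0)

/-- Partial derivative in the second coordinate direction. -/
def pd2 {E : Type*} [NormedAddCommGroup E] [NormedSpace ℝ E]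
    (f : ℝ × ℝ → E) : ℝ × ℝ → E := fun p => fderiv ℝ f p (0, 1)

/-- Euclidean dot product on ℝ³. -/
def dot3 (u v : Fin 3 → ℝ) : ℝ := ∑ i, u i * v i

/-- The unit disk in ℝ². -/
def D2 : Set (ℝ × ℝ) := Metric.ball (0 : ℝ × ℝ) 1
section Infra

variable {E : Type*} [NormedAddCommGroup E] [NormedSpace ℝ E]

lemma isOpen_D2 : IsOpen D2 := Metric.isOpen_ball

lemma pd1_congr {f g : ℝ × ℝ → E} {p : ℝ × ℝ} (h : f =ᶠ[nhds p] g) :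
    pd1 f p = pd1 g p := by unfold pd1; rw [h.fderiv_eq]

lemma pd2_congr {f g : ℝ × ℝ → E} {p : ℝ × ℝ} (h : f =ᶠ[nhds p] g) :
    pd2 f p = pd2 g p := by unfold pd2; rw [h.fderiv_eq]

lemma eqOn_nhds {U : Set (ℝ × ℝ)} (hU : IsOpen U) {p : ℝ × ℝ} (hp : p ∈ U)
    {f g : ℝ × ℝ → E} (h : ∀ q ∈ U, f q = g q) : f =ᶠ[nhds p] g :=
  Filter.eventually_of_mem (hU.mem_nhds hp) h

lemma contDiff_pd1 {f : ℝ × ℝ → E} (hf : ContDiff ℝ (⊤ : ℕ∞) f) : ContDiff ℝ (⊤ : ℕ∞) (pd1 f) := by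
  have h1 : ContDiff ℝ (⊤ : ℕ∞) (fderiv ℝ f) := hf.fderiv_right (by simp)
  exact (ContinuousLinearMap.apply ℝ E ((1 : ℝ), (0 : ℝ))).contDiff.comp h1

lemma contDiff_pd2 {f : ℝ × ℝ → E} (hf : ContDiff ℝ (⊤ : ℕ∞) f) : ContDiff ℝ (⊤ : ℕ∞) (pd2 f) := by
  have h1 : ContDiff ℝ (⊤ : ℕ∞) (fderiv ℝ f) := hf.fderiv_right (by simp)
  exact (ContinuousLinearMap.apply ℝ E ((0 : ℝ), (1 : ℝ))).contDiff.comp h1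

lemma pd_symm {f : ℝ × ℝ → E} (hf : ContDiff ℝ (⊤ : ℕ∞) f) (q : ℝ × ℝ) :
    pd1 (pd2 f) q = pd2 (pd1 f) q := by
  have hd' : DifferentiableAt ℝ (fderiv ℝ f) q :=
    ((hf.fderiv_right (m := (⊤ : ℕ∞)) (by simp)).differentiable (by simp)).differentiableAt
  have hsym : ∀ v w, fderiv ℝ (fderiv ℝ f) q v w = fderiv ℝ (fderiv ℝ f) q w v :=
    hf.contDiffAt.isSymmSndFDerivAt (by rw [minSmoothness_of_isRCLikeNormedField]; exact WithTop.coe_le_coe.mpr (le_top : (2 : ℕ∞) ≤ ⊤))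
  have h1 : pd1 (pd2 f) q = fderiv ℝ (fderiv ℝ f) q (1, 0) (0, 1) := by
    show fderiv ℝ (fun x => fderiv ℝ f x (0, 1)) q (1, 0) = _
    rw [fderiv_clm_apply hd' (differentiableAt_const _)]
    simp [fderiv_const, ContinuousLinearMap.add_apply, ContinuousLinearMap.coe_comp', Function.comp, ContinuousLinearMap.flip_apply]
  have h2 : pd2 (pd1 f) q = fderiv ℝ (fderiv ℝ f) q (0, 1) (1, 0) := by
    show fderiv ℝ (fun x => fderiv ℝ f x (1, 0)) q (0, 1) = _
    rw [fderiv_clm_apply hd' (differentiableAt_const _)]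
    simp [fderiv_const, ContinuousLinearMap.add_apply, ContinuousLinearMap.coe_comp', Function.comp, ContinuousLinearMap.flip_apply]
  rw [h1, h2, hsym]

end Infra

section Rules

variable {p : ℝ × ℝ} {w : ℝ × ℝ} {a b : ℝ × ℝ → ℝ} {f g : ℝ × ℝ → Fin 3 → ℝ}

lemma pdw_mul (ha : DifferentiableAt ℝ a p) (hb : DifferentiableAt ℝ b p) :
    fderiv ℝ (fun q => a q * b q) p w = fderiv ℝ a p w * b p + a p * fderiv ℝ b p w := by
  rw [fderiv_fun_mul ha hb]; simp [ContinuousLinearMap.add_apply]; ring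

lemma pdw_inv (hb : DifferentiableAt ℝ b p) (h0 : b p ≠ 0) :
    fderiv ℝ (fun q => (b q)⁻¹) p w = -(fderiv ℝ b p w) / (b p) ^ 2 := by
  have hcomp : fderiv ℝ (fun q => (b q)⁻¹) p =
      (fderiv ℝ (Inv.inv : ℝ → ℝ) (b p)).comp (fderiv ℝ b p) :=
    fderiv_comp p (differentiableAt_inv h0) hb
  rw [hcomp, fderiv_inv' h0]
  simp only [ContinuousLinearMap.comp_apply, ContinuousLinearMap.neg_apply,
    ContinuousLinearMap.mulLeftRight_apply]
  field_simp

lemma pdw_div (ha : DifferentiableAt ℝ a p) (hb : DifferentiableAt ℝ b p) (h0 : b p ≠ 0) :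
    fderiv ℝ (fun q => a q / b q) p w =
      (fderiv ℝ a p w * b p - a p * fderiv ℝ b p w) / (b p) ^ 2 := by
  have : (fun q => a q / b q) = fun q => a q * (b q)⁻¹ := by
    funext q; rw [div_eq_mul_inv]
  rw [this, pdw_mul (b := fun q => (b q)⁻¹) ha (hb.inv h0), pdw_inv hb h0]
  field_simp
  ring

lemma pdw_smul (ha : DifferentiableAt ℝ a p) (hf : DifferentiableAt ℝ f p) :
    fderiv ℝ (fun q => a q • f q) p w = fderiv ℝ a p w • f p + a p • fderiv ℝ f p w := by
  rw [fderiv_fun_smul ha hf]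
  simp [ContinuousLinearMap.add_apply, ContinuousLinearMap.smulRight_apply]
  abel

lemma diffAt_comp3 (i : Fin 3) (hf : DifferentiableAt ℝ f p) :
    DifferentiableAt ℝ (fun q => f q i) p :=
  (ContinuousLinearMap.proj (R := ℝ) (φ := fun _ : Fin 3 => ℝ) i).differentiableAt.comp p hf

lemma pdw_comp3 (i : Fin 3) (hf : DifferentiableAt ℝ f p) :
    fderiv ℝ (fun q => f q i) p w = fderiv ℝ f p w i := by
  rw [show (fun q => f q i) =
      (⇑(ContinuousLinearMap.proj (R := ℝ) (φ := fun _ : Fin 3 => ℝ) i) ∘ f) from rfl,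
    fderiv_comp p (ContinuousLinearMap.differentiableAt _) hf, ContinuousLinearMap.fderiv]
  rfl

lemma diffAt_dot3 (hf : DifferentiableAt ℝ f p) (hg : DifferentiableAt ℝ g p) :
    DifferentiableAt ℝ (fun q => dot3 (f q) (g q)) p := by
  have : (fun q => dot3 (f q) (g q)) = fun q => ∑ i : Fin 3, f q i * g q i := rfl
  rw [this]
  exact DifferentiableAt.fun_sum fun i _ => (diffAt_comp3 i hf).mul (diffAt_comp3 i hg)

lemma pdw_dot3 (hf : DifferentiableAt ℝ f p) (hg : DifferentiableAt ℝ g p) :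
    fderiv ℝ (fun q => dot3 (f q) (g q)) p w =
      dot3 (fderiv ℝ f p w) (g p) + dot3 (f p) (fderiv ℝ g p w) := by
  have h : (fun q => dot3 (f q) (g q)) = fun q => ∑ i : Fin 3, f q i * g q i := rfl
  rw [h, fderiv_fun_sum (A := fun i q => f q i * g q i) fun i _ => (diffAt_comp3 i hf).mul (diffAt_comp3 i hg)]
  rw [ContinuousLinearMap.sum_apply]
  have : ∀ i : Fin 3, fderiv ℝ (fun q => f q i * g q i) p w =
      fderiv ℝ f p w i * g p i + f p i * fderiv ℝ g p w i := by
    intro i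
    rw [pdw_mul (diffAt_comp3 i hf) (diffAt_comp3 i hg), pdw_comp3 i hf, pdw_comp3 i hg]
  rw [Finset.sum_congr rfl fun i _ => this i]
  simp [dot3, Finset.sum_add_distrib]

end Rules

section Algebra

variable (u v m x y z : Fin 3 → ℝ) (a c : ℝ)

lemma dot3_comm : dot3 u v = dot3 v u := by simp [dot3, mul_comm]

lemma dot3_add_left : dot3 (x + y) z = dot3 x z + dot3 y z := by
  simp [dot3, Finset.sum_add_distrib, add_mul]

lemma dot3_smul_left : dot3 (a • x) z = a * dot3 x z := by
  simp [dot3, Finset.mul_sum, mul_assoc]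

lemma dot3_smul_right : dot3 x (a • z) = a * dot3 x z := by
  simp [dot3, Finset.mul_sum]; ring_nf; simp [mul_comm, mul_left_comm]

lemma cross_dot_self_left : dot3 (crossProduct u v) u = 0 := by
  simp [cross_apply, dot3, Fin.sum_univ_three]; ring

lemma cross_dot_self_right : dot3 (crossProduct u v) v = 0 := by
  simp [cross_apply, dot3, Fin.sum_univ_three]; ring

lemma lagrange3 : dot3 (crossProduct u v) (crossProduct u v) =
    dot3 u u * dot3 v v - dot3 u v * dot3 u v := by
  simp [cross_apply, dot3, Fin.sum_univ_three]; ring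

lemma cross_bilin (a1 a2 b1 b2 : ℝ) :
    crossProduct (a1 • u + a2 • v) (b1 • u + b2 • v) =
      (a1 * b2 - a2 * b1) • crossProduct u v := by
  funext i
  fin_cases i <;>
    simp [cross_apply, Pi.smul_apply, Pi.add_apply] <;> ring

lemma cross_expand (w : Fin 3 → ℝ) :
    (dot3 (crossProduct u v) (crossProduct u v)) • w =
      (dot3 w (crossProduct u v)) • crossProduct u v
        + (dot3 w v * dot3 u u - dot3 w u * dot3 u v) • v
        + (dot3 w u * dot3 v v - dot3 w v * dot3 u v) • u := by
  funext i
  fin_cases i <;>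
    simp [cross_apply, dot3, Fin.sum_univ_three, Pi.smul_apply, Pi.add_apply,
      Matrix.vecHead, Matrix.vecTail, Function.comp] <;> ring

lemma basis_expansion {u v m w : Fin 3 → ℝ} {R : ℝ} (hR : R ≠ 0)
    (h0 : dot3 u v = 0) (h1 : dot3 u u = R) (h2 : dot3 v v = R)
    (hm : m = R⁻¹ • crossProduct u v) :
    w = (dot3 w u / R) • u + (dot3 w v / R) • v + (dot3 w m) • m := by
  have hL := cross_expand u v w
  rw [lagrange3, h0, h1, h2] at hL
  funext i
  have hLi := congrFun hL i
  simp only [Pi.smul_apply, Pi.add_apply, smul_eq_mul] at hLi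
  have hmi : m i = R⁻¹ * (crossProduct u v) i := by rw [hm]; simp
  have hwm : dot3 w m = R⁻¹ * dot3 w (crossProduct u v) := by
    rw [hm, dot3_smul_right]
  simp only [Pi.smul_apply, Pi.add_apply, smul_eq_mul, hmi, hwm]
  field_simp
  linear_combination hLi

end Algebra

section Geom

def cP (Φ : ℝ × ℝ → Fin 3 → ℝ) : ℝ × ℝ → Fin 3 → ℝ :=
  fun q => crossProduct (pd1 Φ q) (pd2 Φ q)

def rr (Φ : ℝ × ℝ → Fin 3 → ℝ) : ℝ × ℝ → ℝ := fun q => dot3 (pd1 Φ q) (pd1 Φ q)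

def Mn (Φ : ℝ × ℝ → Fin 3 → ℝ) : ℝ × ℝ → Fin 3 → ℝ := fun q => (rr Φ q)⁻¹ • cP Φ q

def eef (Φ : ℝ × ℝ → Fin 3 → ℝ) : ℝ × ℝ → ℝ := fun q => dot3 (pd1 (pd1 Φ) q) (Mn Φ q)
def fff (Φ : ℝ × ℝ → Fin 3 → ℝ) : ℝ × ℝ → ℝ := fun q => dot3 (pd2 (pd1 Φ) q) (Mn Φ q)
def ggf (Φ : ℝ × ℝ → Fin 3 → ℝ) : ℝ × ℝ → ℝ := fun q => dot3 (pd2 (pd2 Φ) q) (Mn Φ q)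
def Kf (Φ : ℝ × ℝ → Fin 3 → ℝ) : ℝ × ℝ → ℝ :=
  fun q => (eef Φ q + ggf Φ q) / (2 * rr Φ q)

variable {Φ : ℝ × ℝ → Fin 3 → ℝ} {q : ℝ × ℝ}

lemma contDiff_comp3 {f : ℝ × ℝ → Fin 3 → ℝ} (hf : ContDiff ℝ (⊤ : ℕ∞) f) (i : Fin 3) :
    ContDiff ℝ (⊤ : ℕ∞) (fun q => f q i) :=
  (ContinuousLinearMap.proj (R := ℝ) (φ := fun _ : Fin 3 => ℝ) i).contDiff.comp hf

lemma contDiff_dot3f {f g : ℝ × ℝ → Fin 3 → ℝ} (hf : ContDiff ℝ (⊤ : ℕ∞) f)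
    (hg : ContDiff ℝ (⊤ : ℕ∞) g) : ContDiff ℝ (⊤ : ℕ∞) (fun q => dot3 (f q) (g q)) := by
  have : (fun q => dot3 (f q) (g q)) = fun q => ∑ i : Fin 3, f q i * g q i := rfl
  rw [this]
  exact ContDiff.sum fun i _ => (contDiff_comp3 hf i).mul (contDiff_comp3 hg i)

lemma contDiff_cP (hΦ : ContDiff ℝ (⊤ : ℕ∞) Φ) : ContDiff ℝ (⊤ : ℕ∞) (cP Φ) := by
  have h1 := contDiff_pd1 hΦ
  have h2 := contDiff_pd2 hΦ
  apply contDiff_pi.2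
  intro i
  fin_cases i <;>
  · simp only [cP, cross_apply, Matrix.cons_val_zero, Matrix.cons_val_one, Matrix.head_cons,
      Matrix.cons_val_two, Matrix.tail_cons]
    exact ((contDiff_comp3 h1 _).mul (contDiff_comp3 h2 _)).sub
      ((contDiff_comp3 h1 _).mul (contDiff_comp3 h2 _))

lemma contDiff_rr (hΦ : ContDiff ℝ (⊤ : ℕ∞) Φ) : ContDiff ℝ (⊤ : ℕ∞) (rr Φ) :=
  contDiff_dot3f (contDiff_pd1 hΦ) (contDiff_pd1 hΦ)

lemma diffAt_Mn (hΦ : ContDiff ℝ (⊤ : ℕ∞) Φ) (h0 : rr Φ q ≠ 0) :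
    DifferentiableAt ℝ (Mn Φ) q :=
  (((contDiff_rr hΦ).differentiable (by simp) q).inv h0).smul
    ((contDiff_cP hΦ).differentiable (by simp) q)

lemma diffAt_eef (hΦ : ContDiff ℝ (⊤ : ℕ∞) Φ) (h0 : rr Φ q ≠ 0) :
    DifferentiableAt ℝ (eef Φ) q :=
  diffAt_dot3 ((contDiff_pd1 (contDiff_pd1 hΦ)).differentiable (by simp) q) (diffAt_Mn hΦ h0)

lemma diffAt_fff (hΦ : ContDiff ℝ (⊤ : ℕ∞) Φ) (h0 : rr Φ q ≠ 0) :
    DifferentiableAt ℝ (fff Φ) q :=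
  diffAt_dot3 ((contDiff_pd2 (contDiff_pd1 hΦ)).differentiable (by simp) q) (diffAt_Mn hΦ h0)

lemma diffAt_ggf (hΦ : ContDiff ℝ (⊤ : ℕ∞) Φ) (h0 : rr Φ q ≠ 0) :
    DifferentiableAt ℝ (ggf Φ) q :=
  diffAt_dot3 ((contDiff_pd2 (contDiff_pd2 hΦ)).differentiable (by simp) q) (diffAt_Mn hΦ h0)

lemma diffAt_Kf (hΦ : ContDiff ℝ (⊤ : ℕ∞) Φ) (h0 : rr Φ q ≠ 0) :
    DifferentiableAt ℝ (Kf Φ) q := by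
  unfold Kf
  have h1 : DifferentiableAt ℝ (fun q => eef Φ q + ggf Φ q) q :=
    (diffAt_eef hΦ h0).add (diffAt_ggf hΦ h0)
  have h2 : DifferentiableAt ℝ (fun q => 2 * rr Φ q) q :=
    (differentiableAt_const (2:ℝ)).mul ((contDiff_rr hΦ).differentiable (by simp) q)
  have h3 : (2 * rr Φ q) ≠ 0 := by simpa using h0
  have h4 : (fun q => (eef Φ q + ggf Φ q) / (2 * rr Φ q)) =
      fun q => (eef Φ q + ggf Φ q) * (2 * rr Φ q)⁻¹ := by
    funext q; rw [div_eq_mul_inv]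
  rw [h4]
  exact h1.mul (h2.inv h3)

lemma Mn_dot_u : dot3 (Mn Φ q) (pd1 Φ q) = 0 := by
  show dot3 ((rr Φ q)⁻¹ • cP Φ q) (pd1 Φ q) = 0
  rw [dot3_smul_left, cP, cross_dot_self_left, mul_zero]

lemma Mn_dot_v : dot3 (Mn Φ q) (pd2 Φ q) = 0 := by
  show dot3 ((rr Φ q)⁻¹ • cP Φ q) (pd2 Φ q) = 0
  rw [dot3_smul_left, cP, cross_dot_self_right, mul_zero]

lemma Mn_dot_Mn (hc1 : dot3 (pd1 Φ q) (pd2 Φ q) = 0)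
    (hc2 : dot3 (pd2 Φ q) (pd2 Φ q) = rr Φ q) (h0 : rr Φ q ≠ 0) :
    dot3 (Mn Φ q) (Mn Φ q) = 1 := by
  show dot3 ((rr Φ q)⁻¹ • cP Φ q) ((rr Φ q)⁻¹ • cP Φ q) = 1
  rw [dot3_smul_left, dot3_smul_right, cP, lagrange3, hc1, hc2]
  show (rr Φ q)⁻¹ * ((rr Φ q)⁻¹ * (rr Φ q * rr Φ q - 0 * 0)) = 1
  field_simp
  ring

lemma cP_eq (h0 : rr Φ q ≠ 0) : cP Φ q = rr Φ q • Mn Φ q := by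
  show cP Φ q = rr Φ q • ((rr Φ q)⁻¹ • cP Φ q)
  rw [smul_inv_smul₀ h0]

end Geom

section Geom2

variable {Φ : ℝ × ℝ → Fin 3 → ℝ} {q : ℝ × ℝ}

lemma pd1_dot3_fun {f g : ℝ × ℝ → Fin 3 → ℝ} (hf : DifferentiableAt ℝ f q)
    (hg : DifferentiableAt ℝ g q) :
    pd1 (fun x => dot3 (f x) (g x)) q = dot3 (pd1 f q) (g q) + dot3 (f q) (pd1 g q) :=
  pdw_dot3 hf hg

lemma pd2_dot3_fun {f g : ℝ × ℝ → Fin 3 → ℝ} (hf : DifferentiableAt ℝ f q)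
    (hg : DifferentiableAt ℝ g q) :
    pd2 (fun x => dot3 (f x) (g x)) q = dot3 (pd2 f q) (g q) + dot3 (f q) (pd2 g q) :=
  pdw_dot3 hf hg

lemma pd1_zero : pd1 (fun _ : ℝ × ℝ => (0 : ℝ)) q = 0 := by simp [pd1]

lemma pd2_zero : pd2 (fun _ : ℝ × ℝ => (0 : ℝ)) q = 0 := by simp [pd2]

lemma pd1_one : pd1 (fun _ : ℝ × ℝ => (1 : ℝ)) q = 0 := by simp [pd1]

lemma pd2_one : pd2 (fun _ : ℝ × ℝ => (1 : ℝ)) q = 0 := by simp [pd2]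

-- derivative of |Φ_x|²  (global)
lemma d1 (hΦ : ContDiff ℝ (⊤ : ℕ∞) Φ) :
    pd1 (rr Φ) q = 2 * dot3 (pd1 (pd1 Φ) q) (pd1 Φ q) := by
  have hd : DifferentiableAt ℝ (pd1 Φ) q := (contDiff_pd1 hΦ).differentiable (by simp) q
  have h := pd1_dot3_fun hd hd
  rw [show pd1 (rr Φ) q = pd1 (fun x => dot3 (pd1 Φ x) (pd1 Φ x)) q from rfl, h]
  rw [dot3_comm (pd1 Φ q)]
  ring

lemma d2 (hΦ : ContDiff ℝ (⊤ : ℕ∞) Φ) :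
    pd2 (rr Φ) q = 2 * dot3 (pd2 (pd1 Φ) q) (pd1 Φ q) := by
  have hd : DifferentiableAt ℝ (pd1 Φ) q := (contDiff_pd1 hΦ).differentiable (by simp) q
  have h := pd2_dot3_fun hd hd
  rw [show pd2 (rr Φ) q = pd2 (fun x => dot3 (pd1 Φ x) (pd1 Φ x)) q from rfl, h]
  rw [dot3_comm (pd1 Φ q)]
  ring

-- derivatives of the conformality constraints, on D2
lemma d3 (hΦ : ContDiff ℝ (⊤ : ℕ∞) Φ) (hq : q ∈ D2)
    (hc2 : ∀ x ∈ D2, dot3 (pd2 Φ x) (pd2 Φ x) = rr Φ x) :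
    dot3 (pd2 (pd1 Φ) q) (pd2 Φ q) = pd1 (rr Φ) q / 2 := by
  have hd : DifferentiableAt ℝ (pd2 Φ) q := (contDiff_pd2 hΦ).differentiable (by simp) q
  have h := pd1_dot3_fun hd hd
  have hcongr : pd1 (fun x => dot3 (pd2 Φ x) (pd2 Φ x)) q = pd1 (rr Φ) q :=
    pd1_congr (eqOn_nhds isOpen_D2 hq hc2)
  rw [hcongr] at h
  have hsym : pd1 (pd2 Φ) q = pd2 (pd1 Φ) q := pd_symm hΦ q
  rw [hsym, dot3_comm (pd2 Φ q)] at h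
  linarith

lemma d4 (hΦ : ContDiff ℝ (⊤ : ℕ∞) Φ) (hq : q ∈ D2)
    (hc2 : ∀ x ∈ D2, dot3 (pd2 Φ x) (pd2 Φ x) = rr Φ x) :
    dot3 (pd2 (pd2 Φ) q) (pd2 Φ q) = pd2 (rr Φ) q / 2 := by
  have hd : DifferentiableAt ℝ (pd2 Φ) q := (contDiff_pd2 hΦ).differentiable (by simp) q
  have h := pd2_dot3_fun hd hd
  have hcongr : pd2 (fun x => dot3 (pd2 Φ x) (pd2 Φ x)) q = pd2 (rr Φ) q :=
    pd2_congr (eqOn_nhds isOpen_D2 hq hc2)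
  rw [hcongr] at h
  rw [dot3_comm (pd2 Φ q)] at h
  linarith

lemma d5 (hΦ : ContDiff ℝ (⊤ : ℕ∞) Φ) (hq : q ∈ D2)
    (hc1 : ∀ x ∈ D2, dot3 (pd1 Φ x) (pd2 Φ x) = 0) :
    dot3 (pd1 (pd1 Φ) q) (pd2 Φ q) = -(pd2 (rr Φ) q) / 2 := by
  have hd1 : DifferentiableAt ℝ (pd1 Φ) q := (contDiff_pd1 hΦ).differentiable (by simp) q
  have hd2 : DifferentiableAt ℝ (pd2 Φ) q := (contDiff_pd2 hΦ).differentiable (by simp) q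
  have h := pd1_dot3_fun hd1 hd2
  have hcongr : pd1 (fun x => dot3 (pd1 Φ x) (pd2 Φ x)) q
      = pd1 (fun _ : ℝ × ℝ => (0:ℝ)) q :=
    pd1_congr (eqOn_nhds isOpen_D2 hq hc1)
  rw [hcongr, pd1_zero] at h
  have hsym : pd1 (pd2 Φ) q = pd2 (pd1 Φ) q := pd_symm hΦ q
  rw [hsym] at h
  have h2 := d2 (q := q) hΦ
  rw [dot3_comm (pd1 Φ q)] at h
  linarith

lemma d6 (hΦ : ContDiff ℝ (⊤ : ℕ∞) Φ) (hq : q ∈ D2)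
    (hc1 : ∀ x ∈ D2, dot3 (pd1 Φ x) (pd2 Φ x) = 0)
    (hc2 : ∀ x ∈ D2, dot3 (pd2 Φ x) (pd2 Φ x) = rr Φ x) :
    dot3 (pd2 (pd2 Φ) q) (pd1 Φ q) = -(pd1 (rr Φ) q) / 2 := by
  have hd1 : DifferentiableAt ℝ (pd1 Φ) q := (contDiff_pd1 hΦ).differentiable (by simp) q
  have hd2 : DifferentiableAt ℝ (pd2 Φ) q := (contDiff_pd2 hΦ).differentiable (by simp) q
  have h := pd2_dot3_fun hd1 hd2
  have hcongr : pd2 (fun x => dot3 (pd1 Φ x) (pd2 Φ x)) q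
      = pd2 (fun _ : ℝ × ℝ => (0:ℝ)) q :=
    pd2_congr (eqOn_nhds isOpen_D2 hq hc1)
  rw [hcongr, pd2_zero] at h
  have h3 := d3 hΦ hq hc2
  rw [h3, dot3_comm (pd1 Φ q) (pd2 (pd2 Φ) q)] at h
  linarith

-- dot products of first derivatives of the normal (Weingarten relations)
lemma w1u (hΦ : ContDiff ℝ (⊤ : ℕ∞) Φ) (h0 : rr Φ q ≠ 0) :
    dot3 (pd1 (Mn Φ) q) (pd1 Φ q) = -(eef Φ q) := by
  have hz : (fun x => dot3 (Mn Φ x) (pd1 Φ x)) = fun _ : ℝ × ℝ => (0:ℝ) :=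
    funext fun x => Mn_dot_u
  have h := pd1_dot3_fun (diffAt_Mn hΦ h0) ((contDiff_pd1 hΦ).differentiable (by simp) q)
  rw [hz, pd1_zero] at h
  have : dot3 (Mn Φ q) (pd1 (pd1 Φ) q) = eef Φ q := dot3_comm _ _
  rw [this] at h
  linarith

lemma w1v (hΦ : ContDiff ℝ (⊤ : ℕ∞) Φ) (h0 : rr Φ q ≠ 0) :
    dot3 (pd1 (Mn Φ) q) (pd2 Φ q) = -(fff Φ q) := by
  have hz : (fun x => dot3 (Mn Φ x) (pd2 Φ x)) = fun _ : ℝ × ℝ => (0:ℝ) :=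
    funext fun x => Mn_dot_v
  have h := pd1_dot3_fun (diffAt_Mn hΦ h0) ((contDiff_pd2 hΦ).differentiable (by simp) q)
  rw [hz, pd1_zero] at h
  have hsym : pd1 (pd2 Φ) q = pd2 (pd1 Φ) q := pd_symm hΦ q
  rw [hsym] at h
  have : dot3 (Mn Φ q) (pd2 (pd1 Φ) q) = fff Φ q := dot3_comm _ _
  rw [this] at h
  linarith

lemma w2u (hΦ : ContDiff ℝ (⊤ : ℕ∞) Φ) (h0 : rr Φ q ≠ 0) :
    dot3 (pd2 (Mn Φ) q) (pd1 Φ q) = -(fff Φ q) := by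
  have hz : (fun x => dot3 (Mn Φ x) (pd1 Φ x)) = fun _ : ℝ × ℝ => (0:ℝ) :=
    funext fun x => Mn_dot_u
  have h := pd2_dot3_fun (diffAt_Mn hΦ h0) ((contDiff_pd1 hΦ).differentiable (by simp) q)
  rw [hz, pd2_zero] at h
  have : dot3 (Mn Φ q) (pd2 (pd1 Φ) q) = fff Φ q := dot3_comm _ _
  rw [this] at h
  linarith

lemma w2v (hΦ : ContDiff ℝ (⊤ : ℕ∞) Φ) (h0 : rr Φ q ≠ 0) :
    dot3 (pd2 (Mn Φ) q) (pd2 Φ q) = -(ggf Φ q) := by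
  have hz : (fun x => dot3 (Mn Φ x) (pd2 Φ x)) = fun _ : ℝ × ℝ => (0:ℝ) :=
    funext fun x => Mn_dot_v
  have h := pd2_dot3_fun (diffAt_Mn hΦ h0) ((contDiff_pd2 hΦ).differentiable (by simp) q)
  rw [hz, pd2_zero] at h
  have : dot3 (Mn Φ q) (pd2 (pd2 Φ) q) = ggf Φ q := dot3_comm _ _
  rw [this] at h
  linarith

lemma w1m (hΦ : ContDiff ℝ (⊤ : ℕ∞) Φ) (hq : q ∈ D2)
    (hc1 : ∀ x ∈ D2, dot3 (pd1 Φ x) (pd2 Φ x) = 0)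
    (hc2 : ∀ x ∈ D2, dot3 (pd2 Φ x) (pd2 Φ x) = rr Φ x)
    (hpos : ∀ x ∈ D2, 0 < rr Φ x) :
    dot3 (pd1 (Mn Φ) q) (Mn Φ q) = 0 := by
  have h0 := ne_of_gt (hpos q hq)
  have hone : ∀ x ∈ D2, dot3 (Mn Φ x) (Mn Φ x) = (fun _ : ℝ × ℝ => (1:ℝ)) x :=
    fun x hx => Mn_dot_Mn (hc1 x hx) (hc2 x hx) (ne_of_gt (hpos x hx))
  have h := pd1_dot3_fun (diffAt_Mn hΦ h0) (diffAt_Mn hΦ h0)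
  rw [pd1_congr (eqOn_nhds isOpen_D2 hq hone), pd1_one] at h
  rw [dot3_comm (Mn Φ q)] at h
  linarith

lemma w2m (hΦ : ContDiff ℝ (⊤ : ℕ∞) Φ) (hq : q ∈ D2)
    (hc1 : ∀ x ∈ D2, dot3 (pd1 Φ x) (pd2 Φ x) = 0)
    (hc2 : ∀ x ∈ D2, dot3 (pd2 Φ x) (pd2 Φ x) = rr Φ x)
    (hpos : ∀ x ∈ D2, 0 < rr Φ x) :
    dot3 (pd2 (Mn Φ) q) (Mn Φ q) = 0 := by
  have h0 := ne_of_gt (hpos q hq)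
  have hone : ∀ x ∈ D2, dot3 (Mn Φ x) (Mn Φ x) = (fun _ : ℝ × ℝ => (1:ℝ)) x :=
    fun x hx => Mn_dot_Mn (hc1 x hx) (hc2 x hx) (ne_of_gt (hpos x hx))
  have h := pd2_dot3_fun (diffAt_Mn hΦ h0) (diffAt_Mn hΦ h0)
  rw [pd2_congr (eqOn_nhds isOpen_D2 hq hone), pd2_one] at h
  rw [dot3_comm (Mn Φ q)] at h
  linarith

-- Weingarten equations
lemma W1 (hΦ : ContDiff ℝ (⊤ : ℕ∞) Φ) (hq : q ∈ D2)
    (hc1 : ∀ x ∈ D2, dot3 (pd1 Φ x) (pd2 Φ x) = 0)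
    (hc2 : ∀ x ∈ D2, dot3 (pd2 Φ x) (pd2 Φ x) = rr Φ x)
    (hpos : ∀ x ∈ D2, 0 < rr Φ x) :
    pd1 (Mn Φ) q = (-(eef Φ q) / rr Φ q) • pd1 Φ q
      + (-(fff Φ q) / rr Φ q) • pd2 Φ q := by
  have h0 := ne_of_gt (hpos q hq)
  have hb := basis_expansion (w := pd1 (Mn Φ) q) h0 (hc1 q hq) rfl (hc2 q hq) rfl
  rw [show ((rr Φ q)⁻¹ • (crossProduct (pd1 Φ q)) (pd2 Φ q) : Fin 3 → ℝ) = Mn Φ q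
    from rfl] at hb
  rw [w1u hΦ h0, w1v hΦ h0, w1m hΦ hq hc1 hc2 hpos] at hb
  simpa using hb

lemma W2 (hΦ : ContDiff ℝ (⊤ : ℕ∞) Φ) (hq : q ∈ D2)
    (hc1 : ∀ x ∈ D2, dot3 (pd1 Φ x) (pd2 Φ x) = 0)
    (hc2 : ∀ x ∈ D2, dot3 (pd2 Φ x) (pd2 Φ x) = rr Φ x)
    (hpos : ∀ x ∈ D2, 0 < rr Φ x) :
    pd2 (Mn Φ) q = (-(fff Φ q) / rr Φ q) • pd1 Φ q
      + (-(ggf Φ q) / rr Φ q) • pd2 Φ q := by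
  have h0 := ne_of_gt (hpos q hq)
  have hb := basis_expansion (w := pd2 (Mn Φ) q) h0 (hc1 q hq) rfl (hc2 q hq) rfl
  rw [show ((rr Φ q)⁻¹ • (crossProduct (pd1 Φ q)) (pd2 Φ q) : Fin 3 → ℝ) = Mn Φ q
    from rfl] at hb
  rw [w2u hΦ h0, w2v hΦ h0, w2m hΦ hq hc1 hc2 hpos] at hb
  simpa using hb

lemma diffAt_pd1Mn (hΦ : ContDiff ℝ (⊤ : ℕ∞) Φ) (hq : q ∈ D2)
    (hc1 : ∀ x ∈ D2, dot3 (pd1 Φ x) (pd2 Φ x) = 0)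
    (hc2 : ∀ x ∈ D2, dot3 (pd2 Φ x) (pd2 Φ x) = rr Φ x)
    (hpos : ∀ x ∈ D2, 0 < rr Φ x) :
    DifferentiableAt ℝ (pd1 (Mn Φ)) q := by
  have h0 := ne_of_gt (hpos q hq)
  have heq : (fun x => (-(eef Φ x) * (rr Φ x)⁻¹) • pd1 Φ x
      + (-(fff Φ x) * (rr Φ x)⁻¹) • pd2 Φ x) =ᶠ[nhds q] pd1 (Mn Φ) := by
    apply eqOn_nhds isOpen_D2 hq
    intro x hx
    rw [W1 hΦ hx hc1 hc2 hpos, div_eq_mul_inv, div_eq_mul_inv]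
  apply heq.differentiableAt_iff.mp
  have h0' := ne_of_gt (hpos q hq)
  exact (((diffAt_eef hΦ h0').neg.mul (((contDiff_rr hΦ).differentiable (by simp) q).inv h0')).smul
      ((contDiff_pd1 hΦ).differentiable (by simp) q)).add
    (((diffAt_fff hΦ h0').neg.mul (((contDiff_rr hΦ).differentiable (by simp) q).inv h0')).smul
      ((contDiff_pd2 hΦ).differentiable (by simp) q))

lemma diffAt_pd2Mn (hΦ : ContDiff ℝ (⊤ : ℕ∞) Φ) (hq : q ∈ D2)
    (hc1 : ∀ x ∈ D2, dot3 (pd1 Φ x) (pd2 Φ x) = 0)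
    (hc2 : ∀ x ∈ D2, dot3 (pd2 Φ x) (pd2 Φ x) = rr Φ x)
    (hpos : ∀ x ∈ D2, 0 < rr Φ x) :
    DifferentiableAt ℝ (pd2 (Mn Φ)) q := by
  have h0 := ne_of_gt (hpos q hq)
  have heq : (fun x => (-(fff Φ x) * (rr Φ x)⁻¹) • pd1 Φ x
      + (-(ggf Φ x) * (rr Φ x)⁻¹) • pd2 Φ x) =ᶠ[nhds q] pd2 (Mn Φ) := by
    apply eqOn_nhds isOpen_D2 hq
    intro x hx
    rw [W2 hΦ hx hc1 hc2 hpos, div_eq_mul_inv, div_eq_mul_inv]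
  apply heq.differentiableAt_iff.mp
  have h0' := ne_of_gt (hpos q hq)
  exact (((diffAt_fff hΦ h0').neg.mul (((contDiff_rr hΦ).differentiable (by simp) q).inv h0')).smul
      ((contDiff_pd1 hΦ).differentiable (by simp) q)).add
    (((diffAt_ggf hΦ h0').neg.mul (((contDiff_rr hΦ).differentiable (by simp) q).inv h0')).smul
      ((contDiff_pd2 hΦ).differentiable (by simp) q))

end Geom2

section MoreRules

variable {p w : ℝ × ℝ} {a b : ℝ × ℝ → ℝ}

lemma pdw_add (ha : DifferentiableAt ℝ a p) (hb : DifferentiableAt ℝ b p) :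
    fderiv ℝ (fun q => a q + b q) p w = fderiv ℝ a p w + fderiv ℝ b p w := by
  rw [fderiv_fun_add ha hb]; rfl

lemma pdw_neg : fderiv ℝ (fun q => -(a q)) p w = -(fderiv ℝ a p w) := by
  rw [fderiv_fun_neg]; rfl

lemma dot3_add_right (x y z : Fin 3 → ℝ) : dot3 x (y + z) = dot3 x y + dot3 x z := by
  simp [dot3, Finset.sum_add_distrib, mul_add]

end MoreRules

section Core

variable {Φ : ℝ × ℝ → Fin 3 → ℝ}

set_option maxHeartbeats 2000000 in
lemma core (hΦ : ContDiff ℝ (⊤ : ℕ∞) Φ)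
    (hc1 : ∀ x ∈ D2, dot3 (pd1 Φ x) (pd2 Φ x) = 0)
    (hc2 : ∀ x ∈ D2, dot3 (pd2 Φ x) (pd2 Φ x) = rr Φ x)
    (hpos : ∀ x ∈ D2, 0 < rr Φ x) :
    ∀ p ∈ D2,
      pd1 (pd1 (Mn Φ)) p + pd2 (pd2 (Mn Φ)) p
        + (crossProduct (pd2 (Mn Φ) p) (pd1 (Mn Φ) p)
            - crossProduct (pd1 (Mn Φ) p) (pd2 (Mn Φ) p))
        + (2 : ℝ) • (pd1 (fun q => Kf Φ q • pd1 Φ q) p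
            + pd2 (fun q => Kf Φ q • pd2 Φ q) p)
        = 0 := by
  intro p hp
  have h0 : rr Φ p ≠ 0 := ne_of_gt (hpos p hp)
  -- differentiability
  have hdu : DifferentiableAt ℝ (pd1 Φ) p := (contDiff_pd1 hΦ).differentiable (by simp) p
  have hdv : DifferentiableAt ℝ (pd2 Φ) p := (contDiff_pd2 hΦ).differentiable (by simp) p
  have hdxx : DifferentiableAt ℝ (pd1 (pd1 Φ)) p :=
    (contDiff_pd1 (contDiff_pd1 hΦ)).differentiable (by simp) p
  have hdxy : DifferentiableAt ℝ (pd2 (pd1 Φ)) p :=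
    (contDiff_pd2 (contDiff_pd1 hΦ)).differentiable (by simp) p
  have hdyy : DifferentiableAt ℝ (pd2 (pd2 Φ)) p :=
    (contDiff_pd2 (contDiff_pd2 hΦ)).differentiable (by simp) p
  have hdM : DifferentiableAt ℝ (Mn Φ) p := diffAt_Mn hΦ h0
  have hdM1 : DifferentiableAt ℝ (pd1 (Mn Φ)) p := diffAt_pd1Mn hΦ hp hc1 hc2 hpos
  have hdM2 : DifferentiableAt ℝ (pd2 (Mn Φ)) p := diffAt_pd2Mn hΦ hp hc1 hc2 hpos
  have hde : DifferentiableAt ℝ (eef Φ) p := diffAt_eef hΦ h0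
  have hdf : DifferentiableAt ℝ (fff Φ) p := diffAt_fff hΦ h0
  have hdg : DifferentiableAt ℝ (ggf Φ) p := diffAt_ggf hΦ h0
  have hrd : DifferentiableAt ℝ (rr Φ) p := (contDiff_rr hΦ).differentiable (by simp) p
  -- Schwarz symmetries
  have hs1 : pd1 (pd2 Φ) = pd2 (pd1 Φ) := funext fun x => pd_symm hΦ x
  have hs2 : pd1 (pd2 (pd1 Φ)) p = pd2 (pd1 (pd1 Φ)) p := pd_symm (contDiff_pd1 hΦ) p
  have hs3 : pd1 (pd2 (pd2 Φ)) p = pd2 (pd2 (pd1 Φ)) p := by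
    rw [pd_symm (contDiff_pd2 hΦ) p, hs1]
  -- first order dot facts
  have huv : dot3 (pd1 Φ p) (pd2 Φ p) = 0 := hc1 p hp
  have hvu : dot3 (pd2 Φ p) (pd1 Φ p) = 0 := by rw [dot3_comm]; exact huv
  have huu : dot3 (pd1 Φ p) (pd1 Φ p) = rr Φ p := rfl
  have hvv : dot3 (pd2 Φ p) (pd2 Φ p) = rr Φ p := hc2 p hp
  have hmu : dot3 (Mn Φ p) (pd1 Φ p) = 0 := Mn_dot_u
  have hmv : dot3 (Mn Φ p) (pd2 Φ p) = 0 := Mn_dot_v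
  have hum : dot3 (pd1 Φ p) (Mn Φ p) = 0 := by rw [dot3_comm]; exact hmu
  have hvm : dot3 (pd2 Φ p) (Mn Φ p) = 0 := by rw [dot3_comm]; exact hmv
  have hmm : dot3 (Mn Φ p) (Mn Φ p) = 1 := Mn_dot_Mn huv hvv h0
  -- second fundamental form dot facts
  have hud1 : dot3 (pd1 Φ p) (pd1 (pd1 Φ) p) = pd1 (rr Φ) p / 2 := by
    rw [dot3_comm]; have := d1 (q := p) hΦ; linarith
  have hud2 : dot3 (pd1 Φ p) (pd2 (pd1 Φ) p) = pd2 (rr Φ) p / 2 := by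
    rw [dot3_comm]; have := d2 (q := p) hΦ; linarith
  have hud3 : dot3 (pd1 Φ p) (pd2 (pd2 Φ) p) = -(pd1 (rr Φ) p) / 2 := by
    rw [dot3_comm]; exact d6 hΦ hp hc1 hc2
  have hvd1 : dot3 (pd2 Φ p) (pd1 (pd1 Φ) p) = -(pd2 (rr Φ) p) / 2 := by
    rw [dot3_comm]; exact d5 hΦ hp hc1
  have hvd2 : dot3 (pd2 Φ p) (pd2 (pd1 Φ) p) = pd1 (rr Φ) p / 2 := by
    rw [dot3_comm]; exact d3 hΦ hp hc2
  have hvd3 : dot3 (pd2 Φ p) (pd2 (pd2 Φ) p) = pd2 (rr Φ) p / 2 := by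
    rw [dot3_comm]; exact d4 hΦ hp hc2
  have hmd1 : dot3 (pd1 (pd1 Φ) p) (Mn Φ p) = eef Φ p := rfl
  have hmd2 : dot3 (pd2 (pd1 Φ) p) (Mn Φ p) = fff Φ p := rfl
  have hmd3 : dot3 (pd2 (pd2 Φ) p) (Mn Φ p) = ggf Φ p := rfl
  have hud1' : dot3 (pd1 (pd1 Φ) p) (pd1 Φ p) = pd1 (rr Φ) p / 2 := by
    rw [dot3_comm]; exact hud1
  have hud2' : dot3 (pd2 (pd1 Φ) p) (pd1 Φ p) = pd2 (rr Φ) p / 2 := by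
    rw [dot3_comm]; exact hud2
  have hud3' : dot3 (pd2 (pd2 Φ) p) (pd1 Φ p) = -(pd1 (rr Φ) p) / 2 := by
    rw [dot3_comm]; exact hud3
  have hvd1' : dot3 (pd1 (pd1 Φ) p) (pd2 Φ p) = -(pd2 (rr Φ) p) / 2 := by
    rw [dot3_comm]; exact hvd1
  have hvd2' : dot3 (pd2 (pd1 Φ) p) (pd2 Φ p) = pd1 (rr Φ) p / 2 := by
    rw [dot3_comm]; exact hvd2
  have hvd3' : dot3 (pd2 (pd2 Φ) p) (pd2 Φ p) = pd2 (rr Φ) p / 2 := by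
    rw [dot3_comm]; exact hvd3
  have hmd1' : dot3 (Mn Φ p) (pd1 (pd1 Φ) p) = eef Φ p := by
    rw [dot3_comm]; exact hmd1
  have hmd2' : dot3 (Mn Φ p) (pd2 (pd1 Φ) p) = fff Φ p := by
    rw [dot3_comm]; exact hmd2
  have hmd3' : dot3 (Mn Φ p) (pd2 (pd2 Φ) p) = ggf Φ p := by
    rw [dot3_comm]; exact hmd3
  -- Weingarten at p
  have hA := W1 hΦ hp hc1 hc2 hpos
  have hB := W2 hΦ hp hc1 hc2 hpos
  -- second derivatives of the normal, dotted with the frame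
  have dXu : dot3 (pd1 (pd1 (Mn Φ)) p) (pd1 Φ p)
      = -(pd1 (eef Φ) p) - dot3 (pd1 (Mn Φ) p) (pd1 (pd1 Φ) p) := by
    have hL := pd1_dot3_fun hdM1 hdu
    have hR : pd1 (fun x => dot3 (pd1 (Mn Φ) x) (pd1 Φ x)) p
        = pd1 (fun x => -(eef Φ x)) p :=
      pd1_congr (eqOn_nhds isOpen_D2 hp (fun x hx => w1u hΦ (ne_of_gt (hpos x hx))))
    have hN : pd1 (fun x => -(eef Φ x)) p = -(pd1 (eef Φ) p) := pdw_neg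
    rw [hR, hN] at hL
    linarith
  have dXv : dot3 (pd1 (pd1 (Mn Φ)) p) (pd2 Φ p)
      = -(pd1 (fff Φ) p) - dot3 (pd1 (Mn Φ) p) (pd2 (pd1 Φ) p) := by
    have hL := pd1_dot3_fun hdM1 hdv
    have hR : pd1 (fun x => dot3 (pd1 (Mn Φ) x) (pd2 Φ x)) p
        = pd1 (fun x => -(fff Φ x)) p :=
      pd1_congr (eqOn_nhds isOpen_D2 hp (fun x hx => w1v hΦ (ne_of_gt (hpos x hx))))
    have hN : pd1 (fun x => -(fff Φ x)) p = -(pd1 (fff Φ) p) := pdw_neg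
    rw [hR, hN, congrFun hs1 p] at hL
    linarith
  have dXm : dot3 (pd1 (pd1 (Mn Φ)) p) (Mn Φ p)
      = -(dot3 (pd1 (Mn Φ) p) (pd1 (Mn Φ) p)) := by
    have hL := pd1_dot3_fun hdM1 hdM
    have hR : pd1 (fun x => dot3 (pd1 (Mn Φ) x) (Mn Φ x)) p
        = pd1 (fun _ : ℝ × ℝ => (0:ℝ)) p :=
      pd1_congr (eqOn_nhds isOpen_D2 hp (fun x hx => w1m hΦ hx hc1 hc2 hpos))
    rw [hR, pd1_zero] at hL
    linarith
  have dYu : dot3 (pd2 (pd2 (Mn Φ)) p) (pd1 Φ p)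
      = -(pd2 (fff Φ) p) - dot3 (pd2 (Mn Φ) p) (pd2 (pd1 Φ) p) := by
    have hL := pd2_dot3_fun hdM2 hdu
    have hR : pd2 (fun x => dot3 (pd2 (Mn Φ) x) (pd1 Φ x)) p
        = pd2 (fun x => -(fff Φ x)) p :=
      pd2_congr (eqOn_nhds isOpen_D2 hp (fun x hx => w2u hΦ (ne_of_gt (hpos x hx))))
    have hN : pd2 (fun x => -(fff Φ x)) p = -(pd2 (fff Φ) p) := pdw_neg
    rw [hR, hN] at hL
    linarith
  have dYv : dot3 (pd2 (pd2 (Mn Φ)) p) (pd2 Φ p)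
      = -(pd2 (ggf Φ) p) - dot3 (pd2 (Mn Φ) p) (pd2 (pd2 Φ) p) := by
    have hL := pd2_dot3_fun hdM2 hdv
    have hR : pd2 (fun x => dot3 (pd2 (Mn Φ) x) (pd2 Φ x)) p
        = pd2 (fun x => -(ggf Φ x)) p :=
      pd2_congr (eqOn_nhds isOpen_D2 hp (fun x hx => w2v hΦ (ne_of_gt (hpos x hx))))
    have hN : pd2 (fun x => -(ggf Φ x)) p = -(pd2 (ggf Φ) p) := pdw_neg
    rw [hR, hN] at hL
    linarith
  have dYm : dot3 (pd2 (pd2 (Mn Φ)) p) (Mn Φ p)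
      = -(dot3 (pd2 (Mn Φ) p) (pd2 (Mn Φ) p)) := by
    have hL := pd2_dot3_fun hdM2 hdM
    have hR : pd2 (fun x => dot3 (pd2 (Mn Φ) x) (Mn Φ x)) p
        = pd2 (fun _ : ℝ × ℝ => (0:ℝ)) p :=
      pd2_congr (eqOn_nhds isOpen_D2 hp (fun x hx => w2m hΦ hx hc1 hc2 hpos))
    rw [hR, pd2_zero] at hL
    linarith
  -- derivatives of the coefficients e, f, g
  have he1 : pd1 (eef Φ) p
      = dot3 (pd1 (pd1 (pd1 Φ)) p) (Mn Φ p) + dot3 (pd1 (pd1 Φ) p) (pd1 (Mn Φ) p) :=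
    pd1_dot3_fun hdxx hdM
  have hf1 : pd1 (fff Φ) p
      = dot3 (pd2 (pd1 (pd1 Φ)) p) (Mn Φ p) + dot3 (pd2 (pd1 Φ) p) (pd1 (Mn Φ) p) := by
    have h := pd1_dot3_fun hdxy hdM
    rw [hs2] at h
    exact h
  have hf2 : pd2 (fff Φ) p
      = dot3 (pd2 (pd2 (pd1 Φ)) p) (Mn Φ p) + dot3 (pd2 (pd1 Φ) p) (pd2 (Mn Φ) p) :=
    pd2_dot3_fun hdxy hdM
  have hg1 : pd1 (ggf Φ) p
      = dot3 (pd2 (pd2 (pd1 Φ)) p) (Mn Φ p) + dot3 (pd2 (pd2 Φ) p) (pd1 (Mn Φ) p) := by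
    have h := pd1_dot3_fun hdyy hdM
    rw [hs3] at h
    exact h
  have hg2 : pd2 (ggf Φ) p
      = dot3 (pd2 (pd2 (pd2 Φ)) p) (Mn Φ p) + dot3 (pd2 (pd2 Φ) p) (pd2 (Mn Φ) p) :=
    pd2_dot3_fun hdyy hdM
  have he2 : pd2 (eef Φ) p
      = dot3 (pd2 (pd1 (pd1 Φ)) p) (Mn Φ p) + dot3 (pd1 (pd1 Φ) p) (pd2 (Mn Φ) p) :=
    pd2_dot3_fun hdxx hdM
  -- derivatives of K
  have hden0 : 2 * rr Φ p ≠ 0 := by simpa using h0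
  have hk1 : pd1 (Kf Φ) p
      = ((pd1 (eef Φ) p + pd1 (ggf Φ) p) * (2 * rr Φ p)
          - (eef Φ p + ggf Φ p) * (2 * pd1 (rr Φ) p)) / (2 * rr Φ p)^2 := by
    have h := pdw_div (w := ((1:ℝ),(0:ℝ))) (a := fun q => eef Φ q + ggf Φ q)
      (b := fun q => 2 * rr Φ q) (hde.add hdg)
      ((differentiableAt_const (2:ℝ)).mul hrd) hden0
    rw [pdw_add hde hdg, pdw_mul (differentiableAt_const (2:ℝ)) hrd] at h
    simp at h
    exact h
  have hk2 : pd2 (Kf Φ) p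
      = ((pd2 (eef Φ) p + pd2 (ggf Φ) p) * (2 * rr Φ p)
          - (eef Φ p + ggf Φ p) * (2 * pd2 (rr Φ) p)) / (2 * rr Φ p)^2 := by
    have h := pdw_div (w := ((0:ℝ),(1:ℝ))) (a := fun q => eef Φ q + ggf Φ q)
      (b := fun q => 2 * rr Φ q) (hde.add hdg)
      ((differentiableAt_const (2:ℝ)).mul hrd) hden0
    rw [pdw_add hde hdg, pdw_mul (differentiableAt_const (2:ℝ)) hrd] at h
    simp at h
    exact h
  have hkv : Kf Φ p = (eef Φ p + ggf Φ p) / (2 * rr Φ p) := rfl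
  -- expansion of the H-terms
  have hgl1 : pd1 (fun q => Kf Φ q • pd1 Φ q) p
      = pd1 (Kf Φ) p • pd1 Φ p + Kf Φ p • pd1 (pd1 Φ) p :=
    pdw_smul (diffAt_Kf hΦ h0) hdu
  have hgl2 : pd2 (fun q => Kf Φ q • pd2 Φ q) p
      = pd2 (Kf Φ) p • pd2 Φ p + Kf Φ p • pd2 (pd2 Φ) p :=
    pdw_smul (diffAt_Kf hΦ h0) hdv
  -- the cross-product term
  have hcr : crossProduct (pd2 (Mn Φ) p) (pd1 (Mn Φ) p)
        - crossProduct (pd1 (Mn Φ) p) (pd2 (Mn Φ) p)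
      = (2 * (fff Φ p * fff Φ p - eef Φ p * ggf Φ p) / rr Φ p) • Mn Φ p := by
    rw [hA, hB, cross_bilin, cross_bilin]
    rw [show (crossProduct (pd1 Φ p)) (pd2 Φ p) = cP Φ p from rfl, cP_eq h0]
    rw [smul_smul, smul_smul, ← sub_smul]
    congr 1
    field_simp
    ring
  -- assemble
  rw [hgl1, hgl2, hcr]
  set LV : Fin 3 → ℝ := pd1 (pd1 (Mn Φ)) p + pd2 (pd2 (Mn Φ)) p
      + (2 * (fff Φ p * fff Φ p - eef Φ p * ggf Φ p) / rr Φ p) • Mn Φ p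
      + (2 : ℝ) • (pd1 (Kf Φ) p • pd1 Φ p + Kf Φ p • pd1 (pd1 Φ) p
          + (pd2 (Kf Φ) p • pd2 Φ p + Kf Φ p • pd2 (pd2 Φ) p)) with hLV
  have hbe := basis_expansion (w := LV) h0 huv rfl hvv rfl
  rw [show ((rr Φ p)⁻¹ • (crossProduct (pd1 Φ p)) (pd2 Φ p) : Fin 3 → ℝ) = Mn Φ p
    from rfl] at hbe
  have hz_u : dot3 LV (pd1 Φ p) = 0 := by
    rw [hLV]
    simp only [dXu, dXv, dXm, dYu, dYv, dYm, dot3_add_left, dot3_smul_left]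
    simp only [hk1, hk2, hkv, he1, he2, hf1, hf2, hg1, hg2]
    simp only [hA, hB, dot3_add_left, dot3_add_right, dot3_smul_left, dot3_smul_right]
    simp only [huu, hvv, huv, hvu, hud1, hud2, hud3, hvd1, hvd2, hvd3,
      hud1', hud2', hud3', hvd1', hvd2', hvd3', hmd1, hmd2, hmd3,
      hmd1', hmd2', hmd3', hum, hvm, hmu, hmv, hmm]
    field_simp
    ring
  have hz_v : dot3 LV (pd2 Φ p) = 0 := by
    rw [hLV]
    simp only [dXu, dXv, dXm, dYu, dYv, dYm, dot3_add_left, dot3_smul_left]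
    simp only [hk1, hk2, hkv, he1, he2, hf1, hf2, hg1, hg2]
    simp only [hA, hB, dot3_add_left, dot3_add_right, dot3_smul_left, dot3_smul_right]
    simp only [huu, hvv, huv, hvu, hud1, hud2, hud3, hvd1, hvd2, hvd3,
      hud1', hud2', hud3', hvd1', hvd2', hvd3', hmd1, hmd2, hmd3,
      hmd1', hmd2', hmd3', hum, hvm, hmu, hmv, hmm]
    field_simp
    ring
  have hz_m : dot3 LV (Mn Φ p) = 0 := by
    rw [hLV]
    simp only [dXu, dXv, dXm, dYu, dYv, dYm, dot3_add_left, dot3_smul_left]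
    simp only [hk1, hk2, hkv, he1, he2, hf1, hf2, hg1, hg2]
    simp only [hA, hB, dot3_add_left, dot3_add_right, dot3_smul_left, dot3_smul_right]
    simp only [huu, hvv, huv, hvu, hud1, hud2, hud3, hvd1, hvd2, hvd3,
      hud1', hud2', hud3', hvd1', hvd2', hvd3', hmd1, hmd2, hmd3,
      hmd1', hmd2', hmd3', hum, hvm, hmu, hmv, hmm]
    field_simp
    ring
  rw [hz_u, hz_v, hz_m] at hbe
  simpa using hbe

end Core

theorem stmt8
    (Φ : ℝ × ℝ → Fin 3 → ℝ) (lam : ℝ × ℝ → ℝ) (n : ℝ × ℝ → Fin 3 → ℝ)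
    (e f g H : ℝ × ℝ → ℝ)
    (hΦ : ContDiff ℝ (⊤ : ℕ∞) Φ)
    (hconf : ∀ p ∈ D2,
      dot3 (pd1 Φ p) (pd2 Φ p) = 0 ∧
      dot3 (pd1 Φ p) (pd1 Φ p) = Real.exp (2 * lam p) ∧
      dot3 (pd2 Φ p) (pd2 Φ p) = Real.exp (2 * lam p))
    (hn : ∀ p ∈ D2,
      n p = (Real.sqrt (dot3 (crossProduct (pd1 Φ p) (pd2 Φ p))
          (crossProduct (pd1 Φ p) (pd2 Φ p))))⁻¹ •
        crossProduct (pd1 Φ p) (pd2 Φ p))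
    (he : ∀ p ∈ D2, e p = dot3 (pd1 (pd1 Φ) p) (n p))
    (hf : ∀ p ∈ D2, f p = dot3 (pd2 (pd1 Φ) p) (n p))
    (hg : ∀ p ∈ D2, g p = dot3 (pd2 (pd2 Φ) p) (n p))
    (hH : ∀ p ∈ D2, H p = (e p + g p) / (2 * Real.exp (2 * lam p))) :
    ∀ p ∈ D2,
      pd1 (pd1 n) p + pd2 (pd2 n) p
        + (crossProduct (pd2 n p) (pd1 n p) - crossProduct (pd1 n p) (pd2 n p))
        + (2 : ℝ) • (pd1 (fun q => H q • pd1 Φ q) p + pd2 (fun q => H q • pd2 Φ q) p)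
        = 0 := by
  have hc1 : ∀ x ∈ D2, dot3 (pd1 Φ x) (pd2 Φ x) = 0 := fun x hx => (hconf x hx).1
  have hc2 : ∀ x ∈ D2, dot3 (pd2 Φ x) (pd2 Φ x) = rr Φ x :=
    fun x hx => ((hconf x hx).2.2).trans ((hconf x hx).2.1).symm
  have hpos : ∀ x ∈ D2, 0 < rr Φ x := by
    intro x hx
    rw [show rr Φ x = dot3 (pd1 Φ x) (pd1 Φ x) from rfl, (hconf x hx).2.1]
    exact Real.exp_pos _
  have hnM : ∀ x ∈ D2, n x = Mn Φ x := by
    intro x hx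
    rw [hn x hx]
    have hcc : dot3 (crossProduct (pd1 Φ x) (pd2 Φ x)) (crossProduct (pd1 Φ x) (pd2 Φ x))
        = rr Φ x * rr Φ x := by
      rw [lagrange3, hc1 x hx, hc2 x hx]
      rw [show dot3 (pd1 Φ x) (pd1 Φ x) = rr Φ x from rfl]
      ring
    rw [hcc, Real.sqrt_mul_self (le_of_lt (hpos x hx))]
    rfl
  have hHK : ∀ x ∈ D2, H x = Kf Φ x := by
    intro x hx
    rw [hH x hx, he x hx, hg x hx, hnM x hx,
      show Real.exp (2 * lam x) = rr Φ x from ((hconf x hx).2.1).symm.trans rfl]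
    rfl
  intro p hp
  have h1 : pd1 (pd1 n) p = pd1 (pd1 (Mn Φ)) p := by
    apply pd1_congr
    apply eqOn_nhds isOpen_D2 hp
    intro x hx
    exact pd1_congr (eqOn_nhds isOpen_D2 hx hnM)
  have h2 : pd2 (pd2 n) p = pd2 (pd2 (Mn Φ)) p := by
    apply pd2_congr
    apply eqOn_nhds isOpen_D2 hp
    intro x hx
    exact pd2_congr (eqOn_nhds isOpen_D2 hx hnM)
  have h3 : pd1 n p = pd1 (Mn Φ) p := pd1_congr (eqOn_nhds isOpen_D2 hp hnM)
  have h4 : pd2 n p = pd2 (Mn Φ) p := pd2_congr (eqOn_nhds isOpen_D2 hp hnM)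
  have h5 : pd1 (fun q => H q • pd1 Φ q) p = pd1 (fun q => Kf Φ q • pd1 Φ q) p := by
    apply pd1_congr
    apply eqOn_nhds isOpen_D2 hp
    intro x hx
    rw [hHK x hx]
  have h6 : pd2 (fun q => H q • pd2 Φ q) p = pd2 (fun q => Kf Φ q • pd2 Φ q) p := by
    apply pd2_congr
    apply eqOn_nhds isOpen_D2 hp
    intro x hx
    rw [hHK x hx]
  rw [h1, h2, h3, h4, h5, h6]
  exact core hΦ hc1 hc2 hpos p hp

end
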